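/- Let n ≥ 1, let λ_1, …, λ_n > 0, let ν be a probability measure on [0,∞)^n (the law of a random vector T = (T_1,…,T_n)), and let the pair (T, D) with D = (D_1,…,D_n) taking values in ℕ^n have joint law ν ⊗ κ, where for each t = (t_1,…,t_n) the kernel κ(t) is the product over p = 1,…,n of Poisson distributions on ℕ with means λ_p t_p. Then for every ω with 0 ≤ ω ≤ min_p λ_p: E[ ∏_{p=1}^n (1 − ω/λ_p)^{D_p} ] = E[ exp( −ω ∑_{p=1}^n T_p ) ]. (Here 0^0 is taken to be 1.) -/

import Mathlib

/-!
Conditionally on `T = t` the counts `D_p` are independent Poisson variables with means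
`λ_p t_p`, so `E[∏ z_p ^ D_p | T = t] = ∏ exp ((z_p - 1) λ_p t_p)`. Averaging over `T`
(all quantities are nonnegative, so sums and integrals commute freely in `ℝ≥0∞`) and
substituting `z_p = 1 - ω/λ_p`, which makes `(z_p - 1) λ_p = -ω`, gives the identity.
-/

open MeasureTheory ProbabilityTheory

/-- The Poisson probability mass function with (real) mean `r`: `e^{-r} r^k / k!`. -/
noncomputable def poissonPdf (r : ℝ) (k : ℕ) : ℝ :=
  Real.exp (-r) * r ^ k / (Nat.factorial k)

open scoped ENNReal

theorem ENNReal.tsum_pi_prod_eq_prod_tsum {β : Type*} :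
    ∀ {n : ℕ} (g : Fin n → β → ℝ≥0∞), ∑' f : Fin n → β, ∏ p, g p (f p) = ∏ p, ∑' b, g p b
  | 0, g => by simp
  | n + 1, g => by
    rw [← (Fin.consEquiv fun _ => β).tsum_eq, ENNReal.tsum_prod', Fin.prod_univ_succ]
    simp only [Fin.consEquiv_apply, Fin.prod_univ_succ, Fin.cons_zero, Fin.cons_succ,
      ENNReal.tsum_mul_left, ENNReal.tsum_mul_right]
    rw [ENNReal.tsum_pi_prod_eq_prod_tsum]

theorem lintegral_comp_eq_tsum_mul_measure_preimage {Ω β : Type*} [MeasurableSpace Ω]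
    [MeasurableSpace β] [Countable β] [MeasurableSingletonClass β] {μ : Measure Ω}
    {X : Ω → β} (hX : Measurable X) (g : β → ℝ≥0∞) :
    ∫⁻ x, g (X x) ∂μ = ∑' b, g b * μ {x | X x = b} := by
  rw [← lintegral_map (measurable_of_countable g) hX, lintegral_countable']
  congr 1 with b
  rw [Measure.map_apply hX (measurableSet_singleton b)]
  rfl

theorem poissonPdf_nonneg {r : ℝ} (hr : 0 ≤ r) (k : ℕ) : 0 ≤ poissonPdf r k := by
  unfold poissonPdf
  positivity

theorem measurable_poissonPdf (k : ℕ) : Measurable fun r => poissonPdf r k := by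
  unfold poissonPdf
  fun_prop

theorem hasSum_pow_mul_poissonPdf (z r : ℝ) :
    HasSum (fun k => z ^ k * poissonPdf r k) (Real.exp ((z - 1) * r)) := by
  have hexp := (NormedSpace.expSeries_div_hasSum_exp (z * r)).mul_left (Real.exp (-r))
  rw [← Real.exp_eq_exp_ℝ, ← Real.exp_add, show -r + z * r = (z - 1) * r by ring] at hexp
  have hterm : (fun k => z ^ k * poissonPdf r k)
      = fun k => Real.exp (-r) * ((z * r) ^ k / k.factorial) := by
    funext k
    simp only [poissonPdf, mul_pow]
    ring
  rw [hterm]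
  exact hexp

theorem tsum_ofReal_pow_mul_poissonPdf {z r : ℝ} (hz : 0 ≤ z) (hr : 0 ≤ r) :
    ∑' k, ENNReal.ofReal (z ^ k * poissonPdf r k) = ENNReal.ofReal (Real.exp ((z - 1) * r)) := by
  have hsum := hasSum_pow_mul_poissonPdf z r
  rw [← hsum.tsum_eq, ENNReal.ofReal_tsum_of_nonneg
    (fun k => mul_nonneg (pow_nonneg hz k) (poissonPdf_nonneg hr k)) hsum.summable]

theorem tsum_ofReal_prod_pow_mul_prod_poissonPdf {n : ℕ} {z r : Fin n → ℝ}
    (hz : ∀ p, 0 ≤ z p) (hr : ∀ p, 0 ≤ r p) :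
    ∑' f : Fin n → ℕ,
        ENNReal.ofReal (∏ p, z p ^ f p) * ENNReal.ofReal (∏ p, poissonPdf (r p) (f p))
      = ENNReal.ofReal (Real.exp (∑ p, (z p - 1) * r p)) := by
  have hfactor : ∀ f : Fin n → ℕ,
      ENNReal.ofReal (∏ p, z p ^ f p) * ENNReal.ofReal (∏ p, poissonPdf (r p) (f p))
        = ∏ p, ENNReal.ofReal (z p ^ f p * poissonPdf (r p) (f p)) := fun f => by
    rw [← ENNReal.ofReal_mul (Finset.prod_nonneg fun p _ => pow_nonneg (hz p) _),
      ← Finset.prod_mul_distrib, ENNReal.ofReal_prod_of_nonneg fun p _ =>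
        mul_nonneg (pow_nonneg (hz p) _) (poissonPdf_nonneg (hr p) _)]
  simp only [hfactor, ENNReal.tsum_pi_prod_eq_prod_tsum
      (fun p k => ENNReal.ofReal (z p ^ k * poissonPdf (r p) k)),
    tsum_ofReal_pow_mul_poissonPdf (hz _) (hr _)]
  rw [← ENNReal.ofReal_prod_of_nonneg fun p _ => (Real.exp_pos _).le, ← Real.exp_sum]

theorem lintegral_prod_pow_of_mixedPoisson {Ω α : Type*} [MeasurableSpace Ω]
    [MeasurableSpace α] {μ : Measure Ω} {ν : Measure α} {n : ℕ} {D : Ω → Fin n → ℕ}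
    (hD : Measurable D) {m : α → Fin n → ℝ} (hm : Measurable m) (hm0 : ∀ᵐ a ∂ν, ∀ p, 0 ≤ m a p)
    (hlaw : ∀ f, μ {x | D x = f} = ∫⁻ a, ENNReal.ofReal (∏ p, poissonPdf (m a p) (f p)) ∂ν)
    {z : Fin n → ℝ} (hz : ∀ p, 0 ≤ z p) :
    ∫⁻ x, ENNReal.ofReal (∏ p, z p ^ D x p) ∂μ
      = ∫⁻ a, ENNReal.ofReal (Real.exp (∑ p, (z p - 1) * m a p)) ∂ν := by
  have hkernel_meas : ∀ f : Fin n → ℕ,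
      Measurable fun a => ENNReal.ofReal (∏ p, poissonPdf (m a p) (f p)) := fun f =>
    ENNReal.measurable_ofReal.comp <| Finset.measurable_prod _ fun p _ =>
      (measurable_poissonPdf (f p)).comp ((measurable_pi_apply p).comp hm)
  calc ∫⁻ x, ENNReal.ofReal (∏ p, z p ^ D x p) ∂μ
      = ∑' f : Fin n → ℕ, ENNReal.ofReal (∏ p, z p ^ f p)
          * ∫⁻ a, ENNReal.ofReal (∏ p, poissonPdf (m a p) (f p)) ∂ν := by
        simp only [lintegral_comp_eq_tsum_mul_measure_preimage hD
          (fun f => ENNReal.ofReal (∏ p, z p ^ f p)), hlaw]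
    _ = ∫⁻ a, ∑' f : Fin n → ℕ, ENNReal.ofReal (∏ p, z p ^ f p)
          * ENNReal.ofReal (∏ p, poissonPdf (m a p) (f p)) ∂ν := by
        rw [lintegral_tsum fun f => ((hkernel_meas f).const_mul _).aemeasurable]
        simp only [lintegral_const_mul _ (hkernel_meas _)]
    _ = ∫⁻ a, ENNReal.ofReal (Real.exp (∑ p, (z p - 1) * m a p)) ∂ν := by
        refine lintegral_congr_ae ?_
        filter_upwards [hm0] with a ha
        exact tsum_ofReal_prod_pow_mul_prod_poissonPdf hz ha

theorem stmt4_general {Ω : Type*} [MeasurableSpace Ω] (μ : Measure Ω)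
    (n : ℕ) (lam : Fin n → ℝ) (hlam : ∀ p, 0 < lam p)
    (ν : Measure (Fin n → ℝ))
    (hνsupp : ∀ᵐ t ∂ν, ∀ p, 0 ≤ t p)
    (T : Ω → Fin n → ℝ) (D : Ω → Fin n → ℕ) (hT : Measurable T) (hD : Measurable D)
    (hTlaw : Measure.map T μ = ν)
    (hjoint : ∀ A : Set (Fin n → ℝ), MeasurableSet A → ∀ f : Fin n → ℕ,
      μ (T ⁻¹' A ∩ {x | D x = f})
        = ∫⁻ t in A, ENNReal.ofReal (∏ p, poissonPdf (lam p * t p) (f p)) ∂ν)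
    (ω : ℝ) (hωlam : ∀ p, ω ≤ lam p) :
    ∫ x, ∏ p, (1 - ω / lam p) ^ (D x p) ∂μ
      = ∫ x, Real.exp (-ω * ∑ p, T x p) ∂μ := by
  have hz : ∀ p, 0 ≤ 1 - ω / lam p := fun p =>
    sub_nonneg.mpr ((div_le_one (hlam p)).mpr (hωlam p))
  have hlaw : ∀ f : Fin n → ℕ, μ {x | D x = f}
      = ∫⁻ t, ENNReal.ofReal (∏ p, poissonPdf (lam p * t p) (f p)) ∂ν := fun f => by
    simpa using hjoint Set.univ MeasurableSet.univ f
  have hmean0 : ∀ᵐ t ∂ν, ∀ p, 0 ≤ lam p * t p := by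
    filter_upwards [hνsupp] with t ht p using mul_nonneg (hlam p).le (ht p)
  have hexponent : ∀ (t : Fin n → ℝ) p, (1 - ω / lam p - 1) * (lam p * t p) = -ω * t p :=
    fun t p => by field_simp [(hlam p).ne']; ring
  have hpgf := lintegral_prod_pow_of_mixedPoisson hD (by fun_prop) hmean0 hlaw hz
  simp only [hexponent, ← Finset.mul_sum] at hpgf
  have hpgf_meas : Measurable fun x => ∏ p, (1 - ω / lam p) ^ D x p :=
    (measurable_of_countable fun f : Fin n → ℕ => ∏ p, (1 - ω / lam p) ^ f p).comp hD
  rw [← integral_map (f := fun t => Real.exp (-ω * ∑ p, t p)) hT.aemeasurable (by fun_prop),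
    hTlaw, integral_eq_lintegral_of_nonneg_ae (.of_forall fun x => Finset.prod_nonneg fun p _ =>
      pow_nonneg (hz p) _) hpgf_meas.aestronglyMeasurable,
    integral_eq_lintegral_of_nonneg_ae (.of_forall fun t => (Real.exp_pos _).le) (by fun_prop),
    hpgf]

/-- The substitution `z_p = 1 - ω/λ_p` in the mixed-Poisson joint PGF identity
(the key step of Theorem 4.1 and Theorem 5.2 of the paper): if the pair `(T, D)` has
law `ν ⊗ κ` with `κ` the product-Poisson kernel with means `λ_p t_p`, then for every
`ω` with `0 ≤ ω ≤ min_p λ_p`,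
`E[∏ p, (1 - ω/λ_p) ^ D_p] = E[exp (-ω ∑ p, T_p)]`. -/
theorem stmt4 {Ω : Type*} [MeasurableSpace Ω] (μ : Measure Ω) [IsProbabilityMeasure μ]
    (n : ℕ) (hn : 0 < n) (lam : Fin n → ℝ) (hlam : ∀ p, 0 < lam p)
    (ν : Measure (Fin n → ℝ)) [IsProbabilityMeasure ν]
    (hνsupp : ∀ᵐ t ∂ν, ∀ p, 0 ≤ t p)
    (T : Ω → Fin n → ℝ) (D : Ω → Fin n → ℕ) (hT : Measurable T) (hD : Measurable D)
    (hTlaw : Measure.map T μ = ν)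
    (hjoint : ∀ A : Set (Fin n → ℝ), MeasurableSet A → ∀ f : Fin n → ℕ,
      μ (T ⁻¹' A ∩ {x | D x = f})
        = ∫⁻ t in A, ENNReal.ofReal (∏ p, poissonPdf (lam p * t p) (f p)) ∂ν)
    (ω : ℝ) (hω0 : 0 ≤ ω) (hωlam : ∀ p, ω ≤ lam p) :
    ∫ x, ∏ p, (1 - ω / lam p) ^ (D x p) ∂μ
      = ∫ x, Real.exp (-ω * ∑ p, T x p) ∂μ :=
  stmt4_general μ n lam hlam ν hνsupp T D hT hD hTlaw hjoint ω hωlam
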